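/- arXiv:2204.05812 — 2 statements merged into one kernel-verified Lean document; each statement's English description precedes it below -/
import Mathlib

section
/- Let A ∈ ℝ^{n×n} have symmetric part B with spectral factorization B = Z diag(λ_i) Zᵀ (Z orthogonal), and let H = Z diag(|λ_i|) Zᵀ. Then A₊ = (B + H)/2 is a symmetric positive semidefinite matrix that attains the minimum Frobenius distance from A to the set of symmetric positive semidefinite matrices. -/
open Matrix Real Finset

/-!
Symmetric and skew-symmetric matrices are Frobenius-orthogonal, so for every symmetric `S`,
`‖A - S‖² = ‖B - S‖² + ‖A - B‖²` and it suffices to approximate `B`. Conjugation by the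
orthogonal `Z` preserves the Frobenius norm, so `‖B - S‖² = ‖diag λ - Zᵀ S Z‖²`, which is at
least `∑ᵢ (λᵢ - (Zᵀ S Z)ᵢᵢ)² ≥ ∑ᵢ min(λᵢ, 0)²` because the diagonal of the PSD matrix `Zᵀ S Z` is
nonnegative. The bound is attained by `(B + H)/2 = Z diag(max(λᵢ, 0)) Zᵀ`.
-/

/-- Squared Frobenius norm of a real square matrix. -/
def frobSq {n : ℕ} (A : Matrix (Fin n) (Fin n) ℝ) : ℝ := ∑ i, ∑ j, (A i j)^2

/-- A matrix is Toeplitz if its entries are constant along diagonals. -/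
def IsToeplitz {n : ℕ} (A : Matrix (Fin n) (Fin n) ℝ) : Prop :=
  ∀ i j i' j' : Fin n, (i : ℤ) - (j : ℤ) = (i' : ℤ) - (j' : ℤ) → A i j = A i' j'

/-- The (2k+1)-banded Toeplitz matrix (n;k;σ,δ,τ): subdiagonals σ₁,…,σ_k,
diagonal δ, superdiagonals τ₁,…,τ_k. -/
def bandedToeplitz (n k : ℕ) (σ τ : ℕ → ℝ) (δ : ℝ) : Matrix (Fin n) (Fin n) ℝ :=
  Matrix.of fun i j =>
    if (i : ℕ) = (j : ℕ) then δ
    else if (j : ℕ) < (i : ℕ) ∧ (i : ℕ) - (j : ℕ) ≤ k then σ ((i : ℕ) - (j : ℕ))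
    else if (i : ℕ) < (j : ℕ) ∧ (j : ℕ) - (i : ℕ) ≤ k then τ ((j : ℕ) - (i : ℕ))
    else 0

/-- The tridiagonal Toeplitz matrix (n;1;σ₁,δ,τ₁). -/
def triToeplitz (n : ℕ) (σ₁ δ τ₁ : ℝ) : Matrix (Fin n) (Fin n) ℝ :=
  bandedToeplitz n 1 (fun _ => σ₁) (fun _ => τ₁) δ

lemma frobSq_eq_trace {n : ℕ} (M : Matrix (Fin n) (Fin n) ℝ) :
    frobSq M = (Mᵀ * M).trace := by
  simp only [frobSq, trace, Matrix.diag, mul_apply, transpose_apply, sq]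
  exact Finset.sum_comm

lemma frobSq_diagonal {n : ℕ} (d : Fin n → ℝ) : frobSq (diagonal d) = ∑ i, d i ^ 2 := by
  simp [frobSq, diagonal_apply, Finset.sum_ite_eq]

lemma frobSq_mul_mul_transpose {n : ℕ} {Z : Matrix (Fin n) (Fin n) ℝ} (hZ : Z * Zᵀ = 1)
    (M : Matrix (Fin n) (Fin n) ℝ) : frobSq (Z * M * Zᵀ) = frobSq M := by
  have hZ' : Zᵀ * Z = 1 := mul_eq_one_comm.mp hZ
  rw [frobSq_eq_trace, frobSq_eq_trace, transpose_mul, transpose_mul, transpose_transpose]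
  calc (Z * (Mᵀ * Zᵀ) * (Z * M * Zᵀ)).trace = (Z * (Mᵀ * (Zᵀ * Z) * M) * Zᵀ).trace := by
        noncomm_ring
    _ = (Mᵀ * M).trace := by
        rw [hZ', mul_one, trace_mul_cycle, ← mul_assoc, hZ', one_mul]

lemma frobSq_add_of_isSymm_of_skew {n : ℕ} {X Y : Matrix (Fin n) (Fin n) ℝ}
    (hX : X.IsSymm) (hY : Yᵀ = -Y) : frobSq (X + Y) = frobSq X + frobSq Y := by
  have hcross : (Xᵀ * Y).trace = 0 := by
    have h : (Xᵀ * Y).trace = -(Xᵀ * Y).trace := by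
      calc (Xᵀ * Y).trace = (Yᵀ * X).trace := by
            rw [← trace_transpose, transpose_mul, transpose_transpose]
        _ = -(Y * X).trace := by rw [hY, neg_mul, trace_neg]
        _ = -(Xᵀ * Y).trace := by rw [hX.eq, trace_mul_comm]
    linarith
  have hcross' : (Yᵀ * X).trace = 0 := by
    rw [← trace_transpose, transpose_mul, transpose_transpose, hcross]
  simp only [frobSq_eq_trace, transpose_add, add_mul, mul_add, trace_add, hcross, hcross']
  ring

lemma frobSq_sub_eq_of_isSymm {n : ℕ} (A S : Matrix (Fin n) (Fin n) ℝ) (hS : S.IsSymm) :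
    frobSq (A - S) =
      frobSq ((1 / 2 : ℝ) • (A + Aᵀ) - S) + frobSq (A - (1 / 2 : ℝ) • (A + Aᵀ)) := by
  have hsymm : ((1 / 2 : ℝ) • (A + Aᵀ) - S).IsSymm :=
    ((isSymm_add_transpose_self A).smul _).sub hS
  have hskew : (A - (1 / 2 : ℝ) • (A + Aᵀ))ᵀ = -(A - (1 / 2 : ℝ) • (A + Aᵀ)) := by
    ext i j
    simp only [transpose_apply, Matrix.sub_apply, Matrix.smul_apply, Matrix.add_apply,
      Matrix.neg_apply, smul_eq_mul]
    ring
  rw [← frobSq_add_of_isSymm_of_skew hsymm hskew, sub_add_sub_cancel']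

lemma frobSq_mul_mul_transpose_sub {n : ℕ} {Z : Matrix (Fin n) (Fin n) ℝ} (hZ : Z * Zᵀ = 1)
    (D S : Matrix (Fin n) (Fin n) ℝ) : frobSq (Z * D * Zᵀ - S) = frobSq (D - Zᵀ * S * Z) := by
  have hS : S = Z * (Zᵀ * S * Z) * Zᵀ := by
    calc S = (Z * Zᵀ) * S * (Z * Zᵀ) := by rw [hZ, one_mul, mul_one]
      _ = Z * (Zᵀ * S * Z) * Zᵀ := by noncomm_ring
  rw [← frobSq_mul_mul_transpose hZ (D - Zᵀ * S * Z), mul_sub, sub_mul, ← hS]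

lemma sq_min_zero_le_sq_sub {a m : ℝ} (hm : 0 ≤ m) : min a 0 ^ 2 ≤ (a - m) ^ 2 := by
  rcases le_total 0 a with ha | ha
  · simp [min_eq_right ha, sq_nonneg]
  · rw [min_eq_left ha]
    nlinarith

lemma sum_sq_min_zero_le_frobSq_diagonal_sub {n : ℕ} (d : Fin n → ℝ)
    {M : Matrix (Fin n) (Fin n) ℝ} (hM : M.PosSemidef) :
    ∑ i, min (d i) 0 ^ 2 ≤ frobSq (diagonal d - M) := by
  refine Finset.sum_le_sum fun i _ => ?_
  calc min (d i) 0 ^ 2 ≤ (diagonal d - M) i i ^ 2 := by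
        simpa using sq_min_zero_le_sq_sub (a := d i) hM.diag_nonneg
    _ ≤ ∑ j, (diagonal d - M) i j ^ 2 :=
        Finset.single_le_sum (fun j _ => sq_nonneg ((diagonal d - M) i j)) (Finset.mem_univ i)

lemma sum_sq_min_zero_le_frobSq_sub {n : ℕ} {Z : Matrix (Fin n) (Fin n) ℝ} (hZ : Z * Zᵀ = 1)
    (lam : Fin n → ℝ) {S : Matrix (Fin n) (Fin n) ℝ} (hS : S.PosSemidef) :
    ∑ i, min (lam i) 0 ^ 2 ≤ frobSq (Z * diagonal lam * Zᵀ - S) := by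
  have hS' : (Zᵀ * S * Z).PosSemidef := by
    simpa using hS.mul_mul_conjTranspose_same Zᵀ
  rw [frobSq_mul_mul_transpose_sub hZ]
  exact sum_sq_min_zero_le_frobSq_diagonal_sub lam hS'

lemma frobSq_conj_diagonal_sub_max_zero {n : ℕ} {Z : Matrix (Fin n) (Fin n) ℝ}
    (hZ : Z * Zᵀ = 1) (lam : Fin n → ℝ) :
    frobSq (Z * diagonal lam * Zᵀ - Z * diagonal (fun i => max (lam i) 0) * Zᵀ) =
      ∑ i, min (lam i) 0 ^ 2 := by
  rw [← sub_mul, ← mul_sub, diagonal_sub, frobSq_mul_mul_transpose hZ, frobSq_diagonal]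
  refine Finset.sum_congr rfl fun i _ => ?_
  rcases le_total 0 (lam i) with h | h <;> simp [h]

/-- if `B` is the symmetric part of `A` with spectral factorization
`B = Z diag(λ) Zᵀ` and `H = Z diag(|λ|) Zᵀ`, then `A₊ = (B + H)/2` is a symmetric
positive semidefinite matrix closest to `A` in the Frobenius norm. -/
theorem closest_psd_via_polar_factor {n : ℕ} (A Z : Matrix (Fin n) (Fin n) ℝ)
    (lam : Fin n → ℝ) (hZ : Z * Zᵀ = 1)
    (hB : ((1:ℝ)/2) • (A + Aᵀ) = Z * Matrix.diagonal lam * Zᵀ) :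
    (((1:ℝ)/2) • (((1:ℝ)/2) • (A + Aᵀ) +
        Z * Matrix.diagonal (fun i => |lam i|) * Zᵀ)).PosSemidef ∧
    ∀ S : Matrix (Fin n) (Fin n) ℝ, S.PosSemidef →
      Real.sqrt (frobSq (A - ((1:ℝ)/2) • (((1:ℝ)/2) • (A + Aᵀ) +
          Z * Matrix.diagonal (fun i => |lam i|) * Zᵀ))) ≤
        Real.sqrt (frobSq (A - S)) := by
  have hP : ((1:ℝ)/2) • (((1:ℝ)/2) • (A + Aᵀ) + Z * diagonal (fun i => |lam i|) * Zᵀ) =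
      Z * diagonal (fun i => max (lam i) 0) * Zᵀ := by
    rw [hB, ← add_mul, ← mul_add, diagonal_add, ← Matrix.smul_mul, ← Matrix.mul_smul,
      ← diagonal_smul]
    congr 3
    funext i
    rw [Pi.smul_apply, smul_eq_mul, ← max_zero_add_max_neg_zero_eq_abs_self (lam i)]
    linarith [max_zero_sub_eq_self (lam i)]
  have hPsd : (Z * diagonal (fun i => max (lam i) 0) * Zᵀ).PosSemidef := by
    simpa using (PosSemidef.diagonal fun i => le_max_right (lam i) 0).mul_mul_conjTranspose_same Z
  rw [hP]
  refine ⟨hPsd, fun S hS => Real.sqrt_le_sqrt ?_⟩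
  rw [frobSq_sub_eq_of_isSymm A _ (isHermitian_iff_isSymm.mp hPsd.1),
    frobSq_sub_eq_of_isSymm A S (isHermitian_iff_isSymm.mp hS.1), hB,
    frobSq_conj_diagonal_sub_max_zero hZ]
  exact add_le_add_left (sum_sq_min_zero_le_frobSq_sub hZ lam hS) _
end

section
/- Let σ₁τ₁ ≥ 0. Then the symmetric tridiagonal Toeplitz matrix (n;1;(σ₁+τ₁)/2, δ, (σ₁+τ₁)/2) minimizes the Frobenius distance from T = (n;1;σ₁,δ,τ₁) over all normal tridiagonal Toeplitz matrices. -/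
/-!
The Frobenius norm of a tridiagonal Toeplitz matrix `(n;1;a,d,b)` is `n d² + (n-1)(a² + b²)`,
so the distance from `T` to `(n;1;s,e,t)` only depends on `(σ₁ - s)² + (τ₁ - t)²` and `δ - e`.
Comparing the `(0,0)` entries of `A Aᵀ` and `Aᵀ A` shows that a normal `(n;1;s,e,t)` has
`t = ±s`. Among the symmetric ones (`t = s`) the midpoint `s = (σ₁+τ₁)/2` is closest, and
when `σ₁τ₁ ≥ 0` the shifted skew-symmetric ones (`t = -s`) are no closer, since
`(σ₁-s)² + (τ₁+s)² = (σ₁-τ₁-2s)²/2 + 2σ₁τ₁ + (σ₁-τ₁)²/2`.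
-/

open Matrix Real Finset

lemma Fin.sum_ite_val_eq {M : Type*} [AddCommMonoid M] (n a : ℕ) (c : M) :
    ∑ j : Fin n, (if (j : ℕ) = a then c else 0) = if a < n then c else 0 := by
  rw [Fin.sum_univ_eq_sum_range (fun j => if j = a then c else 0), sum_ite_eq']
  simp only [mem_range]

lemma Fin.sum_sum_ite_val_eq_add_one {M : Type*} [AddCommMonoid M] (n : ℕ) (c : M) :
    ∑ i : Fin n, ∑ j : Fin n, (if (j : ℕ) = i + 1 then c else 0) = (n - 1) • c := by
  simp only [Fin.sum_ite_val_eq]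
  cases n with
  | zero => simp
  | succ m => simp [Fin.sum_univ_castSucc]

section TriToeplitz

variable (n : ℕ) (a d b : ℝ)

lemma triToeplitz_apply (i j : Fin n) :
    triToeplitz n a d b i j =
      if (i : ℕ) = j then d
      else if (i : ℕ) = j + 1 then a
      else if (j : ℕ) = i + 1 then b
      else 0 := by
  simp only [triToeplitz, bandedToeplitz, of_apply]
  split_ifs <;> first | rfl | omega

lemma triToeplitz_apply_sq (i j : Fin n) :
    triToeplitz n a d b i j ^ 2 =
      (if (j : ℕ) = i then d ^ 2 else 0) + (if (i : ℕ) = j + 1 then a ^ 2 else 0) +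
        (if (j : ℕ) = i + 1 then b ^ 2 else 0) := by
  rw [triToeplitz_apply]
  split_ifs <;> first | ring1 | (exfalso; omega)

lemma triToeplitz_sub (a' d' b' : ℝ) :
    triToeplitz n a d b - triToeplitz n a' d' b' = triToeplitz n (a - a') (d - d') (b - b') := by
  ext i j
  simp only [Matrix.sub_apply, triToeplitz_apply]
  split_ifs <;> ring

lemma triToeplitz_transpose : (triToeplitz n a d b)ᵀ = triToeplitz n b d a := by
  ext i j
  simp only [transpose_apply, triToeplitz_apply]
  split_ifs <;> first | rfl | omega

lemma frobSq_triToeplitz :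
    frobSq (triToeplitz n a d b) = n * d ^ 2 + (n - 1 : ℕ) * (a ^ 2 + b ^ 2) := by
  have h_sub : ∑ i : Fin n, ∑ j : Fin n, (if (i : ℕ) = j + 1 then a ^ 2 else 0) =
      (n - 1) • a ^ 2 := by
    rw [sum_comm]
    exact Fin.sum_sum_ite_val_eq_add_one n _
  simp only [frobSq, triToeplitz_apply_sq, sum_add_distrib]
  rw [h_sub, Fin.sum_sum_ite_val_eq_add_one]
  simp [Fin.sum_ite_val_eq]
  ring

lemma sum_triToeplitz_zero_sq (m : ℕ) :
    ∑ k, triToeplitz (m + 2) a d b 0 k ^ 2 = d ^ 2 + b ^ 2 := by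
  simp only [triToeplitz_apply_sq, sum_add_distrib]
  rw [Fin.sum_ite_val_eq, Fin.sum_ite_val_eq]
  simp

variable {n a d b}

lemma sq_eq_sq_of_triToeplitz_normal (hn : 2 ≤ n)
    (h : triToeplitz n a d b * (triToeplitz n a d b)ᵀ =
      (triToeplitz n a d b)ᵀ * triToeplitz n a d b) :
    a ^ 2 = b ^ 2 := by
  obtain ⟨m, rfl⟩ := Nat.exists_eq_add_of_le' hn
  set A := triToeplitz (m + 2) a d b
  have h_row : (A * Aᵀ) 0 0 = d ^ 2 + b ^ 2 := by
    simp only [mul_apply, transpose_apply, ← sq, A, sum_triToeplitz_zero_sq]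
  have h_col : (Aᵀ * A) 0 0 = d ^ 2 + a ^ 2 := by
    rw [← sum_triToeplitz_zero_sq b d a m, ← triToeplitz_transpose]
    simp only [mul_apply, transpose_apply, ← sq, A]
  linarith [congrFun₂ h 0 0]

end TriToeplitz

lemma sq_sub_midpoint_add_sq_sub_midpoint_le {σ τ s t : ℝ} (hστ : 0 ≤ σ * τ)
    (hst : s ^ 2 = t ^ 2) :
    (σ - (σ + τ) / 2) ^ 2 + (τ - (σ + τ) / 2) ^ 2 ≤ (σ - s) ^ 2 + (τ - t) ^ 2 := by
  rcases sq_eq_sq_iff_eq_or_eq_neg.mp hst with rfl | rfl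
  · nlinarith [sq_nonneg (σ + τ - 2 * s)]
  · nlinarith [sq_nonneg (σ - τ + 2 * t)]

/-- if `σ₁τ₁ ≥ 0`, the symmetric tridiagonal Toeplitz matrix
`(n;1;(σ₁+τ₁)/2,δ,(σ₁+τ₁)/2)` minimizes the Frobenius distance from
`T = (n;1;σ₁,δ,τ₁)` over all normal tridiagonal Toeplitz matrices. -/
theorem symmetric_minimizer_of_distance_to_normality {n : ℕ} (hn : 2 ≤ n)
    (σ₁ δ τ₁ : ℝ) (h : 0 ≤ σ₁ * τ₁) :
    (triToeplitz n ((σ₁+τ₁)/2) δ ((σ₁+τ₁)/2) *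
        (triToeplitz n ((σ₁+τ₁)/2) δ ((σ₁+τ₁)/2))ᵀ =
      (triToeplitz n ((σ₁+τ₁)/2) δ ((σ₁+τ₁)/2))ᵀ *
        triToeplitz n ((σ₁+τ₁)/2) δ ((σ₁+τ₁)/2)) ∧
    ∀ s t e : ℝ,
      triToeplitz n s e t * (triToeplitz n s e t)ᵀ =
        (triToeplitz n s e t)ᵀ * triToeplitz n s e t →
      Real.sqrt (frobSq (triToeplitz n σ₁ δ τ₁ -
          triToeplitz n ((σ₁+τ₁)/2) δ ((σ₁+τ₁)/2))) ≤
        Real.sqrt (frobSq (triToeplitz n σ₁ δ τ₁ - triToeplitz n s e t)) := by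
  refine ⟨by rw [triToeplitz_transpose], fun s t e h_normal => ?_⟩
  have h_off := mul_le_mul_of_nonneg_left
    (sq_sub_midpoint_add_sq_sub_midpoint_le h (sq_eq_sq_of_triToeplitz_normal hn h_normal))
    (Nat.cast_nonneg (α := ℝ) (n - 1))
  have h_diag : 0 ≤ (n : ℝ) * (δ - e) ^ 2 := by positivity
  apply Real.sqrt_le_sqrt
  rw [triToeplitz_sub, triToeplitz_sub, frobSq_triToeplitz, frobSq_triToeplitz]
  simp only [sub_self]
  linarith
end
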